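/- Let s : C⊗A → A⊗C be a twisting map with C = k[y]/⟨y^n⟩ and A⊗_s C the corresponding twisted tensor product. Let J_0 ∈ M_n(A) be the nilpotent Jordan matrix (1's on the superdiagonal). Then the maps a ↦ M(a) (where M(a)_{ij} = γ^i_j(a)) and y ↦ J_0 extend to an injective algebra homomorphism φ : A⊗_s C → M_n(A). -/

import Mathlib

open TensorProduct

/-- A twisting map `s : C ⊗ A → A ⊗ C`. -/
def IsTwistingMap (k A C : Type*) [CommRing k] [Ring A] [Ring C] [Algebra k A]
    [Algebra k C] (s : C ⊗[k] A →ₗ[k] A ⊗[k] C) : Prop :=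
  (∀ a : A, s ((1 : C) ⊗ₜ[k] a) = a ⊗ₜ[k] (1 : C)) ∧
  (∀ c : C, s (c ⊗ₜ[k] (1 : A)) = (1 : A) ⊗ₜ[k] c) ∧
  (∀ (c c' : C) (a : A), s ((c * c') ⊗ₜ[k] a) =
    (LinearMap.lTensor A (LinearMap.mul' k C))
      ((TensorProduct.assoc k A C C)
        ((LinearMap.rTensor C s)
          ((TensorProduct.assoc k C A C).symm (c ⊗ₜ[k] (s (c' ⊗ₜ[k] a))))))) ∧
  (∀ (c : C) (a a' : A), s (c ⊗ₜ[k] (a * a')) =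
    (LinearMap.rTensor C (LinearMap.mul' k A))
      ((TensorProduct.assoc k A A C).symm
        ((LinearMap.lTensor A s)
          ((TensorProduct.assoc k A C A)
            ((LinearMap.rTensor A s) ((c ⊗ₜ[k] a) ⊗ₜ[k] a'))))))

/-- The multiplication `μ_s = (μ_A ⊗ μ_C) ∘ (A ⊗ s ⊗ C)` of the twisted tensor
product `A ⊗_s C`. -/
noncomputable def twistedMul (k A C : Type*) [CommRing k] [Ring A] [Ring C]
    [Algebra k A] [Algebra k C] (s : C ⊗[k] A →ₗ[k] A ⊗[k] C) :
    (A ⊗[k] C) ⊗[k] (A ⊗[k] C) →ₗ[k] A ⊗[k] C :=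
  TensorProduct.map (LinearMap.mul' k A) (LinearMap.mul' k C)
    ∘ₗ (TensorProduct.assoc k A A (C ⊗[k] C)).symm.toLinearMap
    ∘ₗ LinearMap.lTensor A ((TensorProduct.assoc k A C C).toLinearMap
        ∘ₗ LinearMap.rTensor C s
        ∘ₗ (TensorProduct.assoc k C A C).symm.toLinearMap)
    ∘ₗ (TensorProduct.assoc k A C (A ⊗[k] C)).toLinearMap

/-- The truncated polynomial algebra `k[y]/⟨y^n⟩`. -/
abbrev TruncPoly (k : Type*) [CommRing k] (n : ℕ) : Type _ :=
  Polynomial k ⧸ Ideal.span {(Polynomial.X : Polynomial k) ^ n}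

/-- The class of `y` in `k[y]/⟨y^n⟩`. -/
noncomputable def truncY (k : Type*) [CommRing k] (n : ℕ) : TruncPoly k n :=
  Ideal.Quotient.mk _ Polynomial.X

/-- The nilpotent Jordan matrix `J₀` (ones on the superdiagonal). -/
def jordanJ (A : Type*) [Ring A] (n : ℕ) : Matrix (Fin n) (Fin n) A :=
  Matrix.of fun i j : Fin n => if (i : ℕ) + 1 = (j : ℕ) then 1 else 0

/-!
Write `C = k[y]/⟨y^n⟩` in its basis `1, y, …, y^(n-1)` and compare coefficients of `y^c` in
the twisting-map axioms evaluated at powers of `y`: they say that `M(a) = (γ^i_j(a))` satisfies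
`M(1) = 1`, `M(a a') = M(a) M(a')`, that row `0` of `M(a)` is `(a, 0, …, 0)`, and that
`J₀^r M(a) = ∑ⱼ M(γ^r_j(a)) J₀^j` (left multiplication by `J₀^r` shifts rows up by `r`).
The last identity is exactly what makes `φ(a ⊗ y^j) = M(a) J₀^j` multiplicative for `μ_s`,
and row `0` of `φ(∑ⱼ aⱼ ⊗ y^j)` is `(a₀, …, a_(n-1))`, which gives injectivity.
-/

theorem Fin.sum_ite_val_eq {β : Type*} [AddCommMonoid β] {n : ℕ} (v : ℕ) (f : Fin n → β) :
    (∑ m : Fin n, if v = m then f m else 0) = if h : v < n then f ⟨v, h⟩ else 0 := by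
  split_ifs with h
  · rw [Finset.sum_eq_single_of_mem ⟨v, h⟩ (Finset.mem_univ _) fun m _ hm => if_neg
      fun hv => hm (Fin.ext hv.symm), if_pos rfl]
  · exact Finset.sum_eq_zero fun m _ => if_neg (by rintro rfl; exact h m.isLt)

namespace TruncPoly

variable {k : Type*} [CommRing k] {n : ℕ}

theorem truncY_pow_eq_zero {j : ℕ} (hj : n ≤ j) : truncY k n ^ j = 0 := by
  have hn : truncY k n ^ n = 0 := by
    rw [truncY, ← map_pow, Ideal.Quotient.eq_zero_iff_mem]
    exact Ideal.mem_span_singleton_self _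
  rw [← Nat.add_sub_cancel' hj, pow_add, hn, zero_mul]

variable [Nontrivial k]

noncomputable def powBasis : Module.Basis (Fin n) k (TruncPoly k n) :=
  (AdjoinRoot.powerBasis' (Polynomial.monic_X_pow n)).basis.reindex
    (finCongr (Polynomial.natDegree_X_pow n))

theorem powBasis_apply (i : Fin n) : powBasis i = truncY k n ^ (i : ℕ) := by
  show (AdjoinRoot.powerBasis' (Polynomial.monic_X_pow (R := k) n)).basis.reindex
    (finCongr (Polynomial.natDegree_X_pow n)) i = _
  rw [Module.Basis.reindex_apply]
  exact PowerBasis.basis_eq_pow _ _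

variable {M : Type*} [AddCommMonoid M] [Module k M]

noncomputable def coeff (c : Fin n) : M ⊗[k] TruncPoly k n →ₗ[k] M :=
  Finsupp.lapply c ∘ₗ (equivFinsuppOfBasisRight powBasis).toLinearMap

theorem coeff_tmul_pow (c : Fin n) (x : M) (j : ℕ) :
    coeff c (x ⊗ₜ[k] (truncY k n ^ j)) = if j = c then x else 0 := by
  by_cases hj : j < n
  · have := powBasis_apply (k := k) ⟨j, hj⟩
    simp only [coeff, LinearMap.comp_apply, LinearEquiv.coe_coe, Finsupp.lapply_apply]
    rw [← this, equivFinsuppOfBasisRight_apply_tmul_apply, Module.Basis.repr_self,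
      Finsupp.single_apply]
    simp [Fin.ext_iff]
  · rw [truncY_pow_eq_zero (not_lt.1 hj), tmul_zero, map_zero, if_neg (by omega)]

theorem coeff_sum_tmul_pow (c : Fin n) (x : ℕ → M) :
    coeff c (∑ j ∈ Finset.range n, x j ⊗ₜ[k] (truncY k n ^ j)) = x c := by
  simp [coeff_tmul_pow]

theorem ext_coeff {p q : M ⊗[k] TruncPoly k n} (h : ∀ c : Fin n, coeff c p = coeff c q) :
    p = q :=
  (equivFinsuppOfBasisRight powBasis).injective (Finsupp.ext h)

theorem tensor_ext {P : Type*} [AddCommMonoid P] [Module k P]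
    {f g : M ⊗[k] TruncPoly k n →ₗ[k] P}
    (h : ∀ (x : M) (j : ℕ), j < n →
      f (x ⊗ₜ[k] (truncY k n ^ j)) = g (x ⊗ₜ[k] (truncY k n ^ j))) :
    f = g :=
  TensorProduct.ext <| LinearMap.ext fun x => powBasis.ext fun j => by
    simpa [powBasis_apply] using h x j j.isLt

end TruncPoly

section Jordan

variable {A : Type*} [Ring A] {n : ℕ}

theorem jordanJ_pow_apply (j : ℕ) (i c : Fin n) :
    (jordanJ A n ^ j) i c = if (i : ℕ) + j = c then 1 else 0 := by
  induction j generalizing c with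
  | zero => simp [Matrix.one_apply, Fin.ext_iff]
  | succ j ih =>
    rw [pow_succ, Matrix.mul_apply]
    simp only [ih, ite_mul, one_mul, zero_mul, Fin.sum_ite_val_eq]
    simp only [jordanJ, Matrix.of_apply]
    have := c.isLt
    split_ifs <;> first | rfl | omega

theorem jordanJ_pow_eq_zero {j : ℕ} (hj : n ≤ j) : jordanJ A n ^ j = 0 := by
  ext i c
  rw [jordanJ_pow_apply, if_neg (by omega), Matrix.zero_apply]

theorem mul_jordanJ_pow_apply (X : Matrix (Fin n) (Fin n) A) (j : ℕ) (i c : Fin n) :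
    (X * jordanJ A n ^ j) i c = ∑ m : Fin n, if (m : ℕ) + j = c then X i m else 0 := by
  simp [Matrix.mul_apply, jordanJ_pow_apply]

theorem jordanJ_pow_mul_apply (X : Matrix (Fin n) (Fin n) A) (r : ℕ) (i c : Fin n) :
    (jordanJ A n ^ r * X) i c = if h : (i : ℕ) + r < n then X ⟨i + r, h⟩ c else 0 := by
  simp only [Matrix.mul_apply, jordanJ_pow_apply, ite_mul, one_mul, zero_mul,
    Fin.sum_ite_val_eq]

end Jordan

theorem twistedMul_tmul {k A C : Type*} [CommRing k] [Ring A] [Ring C] [Algebra k A]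
    [Algebra k C] (s : C ⊗[k] A →ₗ[k] A ⊗[k] C) (a a' : A) (c c' : C) :
    twistedMul k A C s ((a ⊗ₜ[k] c) ⊗ₜ[k] (a' ⊗ₜ[k] c')) =
      map (LinearMap.mulLeft k a) (LinearMap.mulRight k c') (s (c ⊗ₜ[k] a')) := by
  simp only [twistedMul, LinearMap.comp_apply, LinearEquiv.coe_coe, assoc_tmul,
    LinearMap.lTensor_tmul, assoc_symm_tmul, LinearMap.rTensor_tmul]
  induction s (c ⊗ₜ[k] a') using TensorProduct.induction_on with
  | zero => simp
  | tmul x u => simp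
  | add z₁ z₂ h₁ h₂ => simp only [add_tmul, tmul_add, map_add, h₁, h₂]

section StructureMaps

variable {k A : Type*} [CommRing k] [Ring A] [Algebra k A] {n : ℕ}

open TruncPoly

def HasStructureMaps (s : TruncPoly k n ⊗[k] A →ₗ[k] A ⊗[k] TruncPoly k n)
    (γ : ℕ → ℕ → Module.End k A) : Prop :=
  ∀ r < n, ∀ a : A,
    s ((truncY k n ^ r) ⊗ₜ[k] a) = ∑ j ∈ Finset.range n, γ r j a ⊗ₜ[k] (truncY k n ^ j)

def gammaMatrix (γ : ℕ → ℕ → Module.End k A) (n : ℕ) : A →ₗ[k] Matrix (Fin n) (Fin n) A where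
  toFun a := Matrix.of fun i j : Fin n => γ i j a
  map_add' a b := by ext; simp
  map_smul' r a := by ext; simp

@[simp]
theorem gammaMatrix_apply (γ : ℕ → ℕ → Module.End k A) (a : A) (i j : Fin n) :
    gammaMatrix γ n a i j = γ i j a :=
  rfl

variable [Nontrivial k] {s : TruncPoly k n ⊗[k] A →ₗ[k] A ⊗[k] TruncPoly k n}
  {γ : ℕ → ℕ → Module.End k A}

theorem HasStructureMaps.coeff_apply_tmul_pow (hs : HasStructureMaps s γ) (c : Fin n) (r : ℕ)
    (a : A) : coeff c (s ((truncY k n ^ r) ⊗ₜ[k] a)) = if r < n then γ r c a else 0 := by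
  split_ifs with hr
  · rw [hs r hr, coeff_sum_tmul_pow]
  · rw [truncY_pow_eq_zero (not_lt.1 hr), zero_tmul, map_zero, map_zero]

theorem HasStructureMaps.gamma_zero (htw : IsTwistingMap k A (TruncPoly k n) s)
    (hs : HasStructureMaps s γ) (c : Fin n) (a : A) :
    γ 0 c a = if (c : ℕ) = 0 then a else 0 := by
  have := hs.coeff_apply_tmul_pow c 0 a
  rw [pow_zero, htw.1, ← pow_zero (truncY k n), coeff_tmul_pow, if_pos c.pos] at this
  rw [← this]
  exact if_congr eq_comm rfl rfl

theorem HasStructureMaps.gammaMatrix_one (htw : IsTwistingMap k A (TruncPoly k n) s)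
    (hs : HasStructureMaps s γ) : gammaMatrix γ n 1 = 1 := by
  ext i c
  have := hs.coeff_apply_tmul_pow c i 1
  rw [htw.2.1, coeff_tmul_pow, if_pos i.isLt] at this
  rw [gammaMatrix_apply, ← this, Matrix.one_apply]
  exact if_congr Fin.val_inj rfl rfl

theorem HasStructureMaps.gamma_mul (htw : IsTwistingMap k A (TruncPoly k n) s)
    (hs : HasStructureMaps s γ) {i : ℕ} (hi : i < n) (c : Fin n) (a a' : A) :
    γ i c (a * a') = ∑ m ∈ Finset.range n, γ i m a * γ m c a' := by
  have := congrArg (coeff c) (htw.2.2.2 (truncY k n ^ i) a a')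
  rw [hs i hi (a * a'), coeff_sum_tmul_pow, LinearMap.rTensor_tmul, hs i hi a, sum_tmul] at this
  simp only [map_sum, assoc_tmul, LinearMap.lTensor_tmul] at this
  rw [this]
  refine Finset.sum_congr rfl fun m hm => ?_
  rw [hs m (Finset.mem_range.1 hm), tmul_sum]
  simp only [map_sum, assoc_symm_tmul, LinearMap.rTensor_tmul, LinearMap.mul'_apply,
    coeff_tmul_pow, Finset.sum_ite_eq', Finset.mem_range, c.isLt, if_true]

theorem HasStructureMaps.gamma_add (htw : IsTwistingMap k A (TruncPoly k n) s)
    (hs : HasStructureMaps s γ) {i r : ℕ} (hi : i < n) (hr : r < n) (c : Fin n) (a : A) :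
    (if i + r < n then γ (i + r) c a else 0) =
      ∑ j ∈ Finset.range n, ∑ l ∈ Finset.range n, if l + j = c then γ i l (γ r j a) else 0 := by
  have := congrArg (coeff c) (htw.2.2.1 (truncY k n ^ i) (truncY k n ^ r) a)
  rw [← pow_add, hs.coeff_apply_tmul_pow, hs r hr a, tmul_sum] at this
  simp only [map_sum, assoc_symm_tmul, LinearMap.rTensor_tmul] at this
  rw [this]
  refine Finset.sum_congr rfl fun j _ => ?_
  rw [hs i hi, sum_tmul]
  simp only [map_sum, assoc_tmul, LinearMap.lTensor_tmul, LinearMap.mul'_apply, ← pow_add,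
    coeff_tmul_pow]

theorem HasStructureMaps.gammaMatrix_mul (htw : IsTwistingMap k A (TruncPoly k n) s)
    (hs : HasStructureMaps s γ) (a a' : A) :
    gammaMatrix γ n (a * a') = gammaMatrix γ n a * gammaMatrix γ n a' := by
  ext i c
  rw [gammaMatrix_apply, hs.gamma_mul htw i.isLt, Matrix.mul_apply, Finset.sum_range]
  rfl

theorem HasStructureMaps.jordanJ_pow_mul_gammaMatrix (htw : IsTwistingMap k A (TruncPoly k n) s)
    (hs : HasStructureMaps s γ) {r : ℕ} (hr : r < n) (a : A) :
    jordanJ A n ^ r * gammaMatrix γ n a =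
      ∑ j ∈ Finset.range n, gammaMatrix γ n (γ r j a) * jordanJ A n ^ j := by
  ext i c
  rw [jordanJ_pow_mul_apply, Matrix.sum_apply]
  simp only [gammaMatrix_apply, dite_eq_ite]
  rw [hs.gamma_add htw i.isLt hr c a]
  refine Finset.sum_congr rfl fun j _ => ?_
  rw [mul_jordanJ_pow_apply, Finset.sum_range]
  rfl

end StructureMaps

section Representation

variable {k A : Type*} [CommRing k] [Nontrivial k] [Ring A] [Algebra k A] {n : ℕ}

open TruncPoly

noncomputable def twistedRep (γ : ℕ → ℕ → Module.End k A) (n : ℕ) :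
    A ⊗[k] TruncPoly k n →ₗ[k] Matrix (Fin n) (Fin n) A :=
  ∑ c : Fin n, LinearMap.mulRight k (jordanJ A n ^ (c : ℕ)) ∘ₗ gammaMatrix γ n ∘ₗ coeff c

theorem twistedRep_tmul_pow (γ : ℕ → ℕ → Module.End k A) (a : A) (j : ℕ) :
    twistedRep γ n (a ⊗ₜ[k] (truncY k n ^ j)) = gammaMatrix γ n a * jordanJ A n ^ j := by
  by_cases hj : j < n
  · simp only [twistedRep, LinearMap.sum_apply, LinearMap.comp_apply, coeff_tmul_pow,
      LinearMap.mulRight_apply, apply_ite (gammaMatrix γ n), map_zero, ite_mul, zero_mul,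
      Fin.sum_ite_val_eq, dif_pos hj]
  · rw [truncY_pow_eq_zero (not_lt.1 hj), jordanJ_pow_eq_zero (not_lt.1 hj), tmul_zero,
      map_zero, mul_zero]

variable {s : TruncPoly k n ⊗[k] A →ₗ[k] A ⊗[k] TruncPoly k n} {γ : ℕ → ℕ → Module.End k A}

theorem HasStructureMaps.twistedRep_apply_zero (htw : IsTwistingMap k A (TruncPoly k n) s)
    (hs : HasStructureMaps s γ) (p : A ⊗[k] TruncPoly k n) (c : Fin n) :
    twistedRep γ n p ⟨0, c.pos⟩ c = coeff c p := by
  have : Matrix.entryLinearMap k A ⟨0, c.pos⟩ c ∘ₗ twistedRep γ n = coeff c := by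
    refine tensor_ext fun a j _ => ?_
    simp only [LinearMap.comp_apply, Matrix.entryLinearMap_apply, twistedRep_tmul_pow,
      mul_jordanJ_pow_apply, gammaMatrix_apply, hs.gamma_zero htw, coeff_tmul_pow]
    rw [Finset.sum_eq_single_of_mem ⟨0, c.pos⟩ (Finset.mem_univ _) fun m _ hm => by
      simp [Fin.ext_iff] at hm; simp [hm]]
    simp
  exact LinearMap.congr_fun this p

theorem HasStructureMaps.twistedRep_injective (htw : IsTwistingMap k A (TruncPoly k n) s)
    (hs : HasStructureMaps s γ) : Function.Injective (twistedRep γ n) := fun p q hpq =>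
  ext_coeff fun c => by
    rw [← hs.twistedRep_apply_zero htw, ← hs.twistedRep_apply_zero htw, hpq]

theorem HasStructureMaps.twistedRep_one (htw : IsTwistingMap k A (TruncPoly k n) s)
    (hs : HasStructureMaps s γ) : twistedRep γ n (1 ⊗ₜ[k] 1) = 1 := by
  rw [← pow_zero (truncY k n), twistedRep_tmul_pow, hs.gammaMatrix_one htw, pow_zero, mul_one]

theorem HasStructureMaps.twistedRep_twistedMul (htw : IsTwistingMap k A (TruncPoly k n) s)
    (hs : HasStructureMaps s γ) (p q : A ⊗[k] TruncPoly k n) :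
    twistedRep γ n (twistedMul k A (TruncPoly k n) s (p ⊗ₜ[k] q)) =
      twistedRep γ n p * twistedRep γ n q := by
  have hpure : ∀ (a a' : A) (r t : ℕ), r < n →
      twistedRep γ n (twistedMul k A (TruncPoly k n) s
          ((a ⊗ₜ[k] (truncY k n ^ r)) ⊗ₜ[k] (a' ⊗ₜ[k] (truncY k n ^ t)))) =
        gammaMatrix γ n a * jordanJ A n ^ r * (gammaMatrix γ n a' * jordanJ A n ^ t) := by
    intro a a' r t hr
    rw [twistedMul_tmul, hs r hr a', map_sum, map_sum]
    simp only [map_tmul, LinearMap.mulLeft_apply, LinearMap.mulRight_apply, ← pow_add,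
      twistedRep_tmul_pow]
    calc ∑ j ∈ Finset.range n, gammaMatrix γ n (a * γ r j a') * jordanJ A n ^ (j + t)
        = gammaMatrix γ n a * (∑ j ∈ Finset.range n,
            gammaMatrix γ n (γ r j a') * jordanJ A n ^ j) * jordanJ A n ^ t := by
          simp only [hs.gammaMatrix_mul htw, pow_add, Finset.mul_sum, Finset.sum_mul, mul_assoc]
      _ = _ := by
          rw [← hs.jordanJ_pow_mul_gammaMatrix htw hr]
          simp only [mul_assoc]
  have : (mk k _ _).compr₂ (twistedRep γ n ∘ₗ twistedMul k A (TruncPoly k n) s) =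
      (LinearMap.mul k _).compl₁₂ (twistedRep γ n) (twistedRep γ n) :=
    tensor_ext fun a r hr => tensor_ext fun a' t _ => by
      simpa [twistedRep_tmul_pow] using hpure a a' r t hr
  exact LinearMap.congr_fun₂ this p q

end Representation

theorem statement6_general {k A : Type*} [CommRing k] [Ring A] [Algebra k A] (n : ℕ)
    (s : TruncPoly k n ⊗[k] A →ₗ[k] A ⊗[k] TruncPoly k n)
    (htw : IsTwistingMap k A (TruncPoly k n) s)
    (γ : ℕ → ℕ → Module.End k A)
    (hs : ∀ r < n, ∀ a : A,
      s (((truncY k n) ^ r) ⊗ₜ[k] a) =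
        ∑ j ∈ Finset.range n, γ r j a ⊗ₜ[k] ((truncY k n) ^ j)) :
    ∃ φ : A ⊗[k] TruncPoly k n →ₗ[k] Matrix (Fin n) (Fin n) A,
      Function.Injective φ ∧
      φ ((1 : A) ⊗ₜ[k] (1 : TruncPoly k n)) = 1 ∧
      (∀ (a : A) (j : ℕ),
        φ (a ⊗ₜ[k] ((truncY k n) ^ j)) =
          Matrix.of (fun i j' : Fin n => γ (i : ℕ) (j' : ℕ) a) * (jordanJ A n) ^ j) ∧
      (∀ p q : A ⊗[k] TruncPoly k n,
        φ (twistedMul k A (TruncPoly k n) s (p ⊗ₜ[k] q)) = φ p * φ q) := by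
  rcases subsingleton_or_nontrivial k with hk | hk
  · have : Subsingleton A := Module.subsingleton k A
    exact ⟨0, fun p q _ => Subsingleton.elim (α := A ⊗[k] TruncPoly k n) p q,
      Subsingleton.elim _ _, fun _ _ => Subsingleton.elim _ _, fun _ _ => Subsingleton.elim _ _⟩
  replace hs : HasStructureMaps s γ := hs
  exact ⟨twistedRep γ n, hs.twistedRep_injective htw, hs.twistedRep_one htw,
    twistedRep_tmul_pow γ, hs.twistedRep_twistedMul htw⟩

/-- The maps `a ↦ M(a)` and `y ↦ J₀` extend to an injective algebra homomorphism
`φ : A ⊗_s k[y]/⟨y^n⟩ → Mₙ(A)`. -/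
theorem statement6 {k A : Type*} [CommRing k] [Ring A] [Algebra k A] (n : ℕ)
    (hn : 0 < n)
    (s : TruncPoly k n ⊗[k] A →ₗ[k] A ⊗[k] TruncPoly k n)
    (htw : IsTwistingMap k A (TruncPoly k n) s)
    (γ : ℕ → ℕ → Module.End k A)
    (hs : ∀ r < n, ∀ a : A,
      s (((truncY k n) ^ r) ⊗ₜ[k] a) =
        ∑ j ∈ Finset.range n, γ r j a ⊗ₜ[k] ((truncY k n) ^ j))
    (hγn : ∀ j < n, γ n j = 0) :
    ∃ φ : A ⊗[k] TruncPoly k n →ₗ[k] Matrix (Fin n) (Fin n) A,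
      Function.Injective φ ∧
      φ ((1 : A) ⊗ₜ[k] (1 : TruncPoly k n)) = 1 ∧
      (∀ (a : A) (j : ℕ),
        φ (a ⊗ₜ[k] ((truncY k n) ^ j)) =
          Matrix.of (fun i j' : Fin n => γ (i : ℕ) (j' : ℕ) a) * (jordanJ A n) ^ j) ∧
      (∀ p q : A ⊗[k] TruncPoly k n,
        φ (twistedMul k A (TruncPoly k n) s (p ⊗ₜ[k] q)) = φ p * φ q) :=
  statement6_general n s htw γ hs
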